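/- Let R be a commutative ring, let m ≥ 1, let n_1,…,n_m be positive integers, and let u_1,…,u_m ∈ R. Suppose that for each i with 1 ≤ i ≤ m there are elements y^{(i)}_1,…,y^{(i)}_{n_i} ∈ R, each lying in the additive subgroup of R generated by u_1,…,u_{i−1} (for i = 1 this subgroup is {0}), such that u_i · ∏_{j=1}^{n_i} (u_i + y^{(i)}_j) = 0. Then for every k with 1 ≤ k ≤ m and all nonnegative integers l_1,…,l_k with l_1 + ⋯ + l_k = n_1 + ⋯ + n_k + 1, one has u_1^{l_1} u_2^{l_2} ⋯ u_k^{l_k} = 0. -/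

import Mathlib

/-!
Let `J k` be the ideal generated by `u 0, …, u (k-1)` and `N k = nn 0 + ⋯ + nn (k-1)`. The
monomials of degree `N k + 1` lie in `J k ^ (N k + 1)`, so it suffices that this power vanishes,
by induction on `k`. Expanding the relation shows `u k ^ (nn k + 1) ∈ J k * J (k+1) ^ nn k`.
Since `J (k+1) = J k ⊔ (u k)`, every power `J (k+1) ^ (c+1)` lies in
`J k * J (k+1) ^ c ⊔ (u k ^ (c+1))`, so `J (k+1) ^ (c+1) ≤ J k * J (k+1) ^ c` once `c ≥ nn k`.
Iterating `N k + 1` times gives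
`J (k+1) ^ (N k + nn k + 1) ≤ J k ^ (N k + 1) * J (k+1) ^ nn k = ⊥`.
-/

open Finset

namespace Ideal

variable {R : Type*} [CommRing R]

theorem mul_prod_add_sub_pow_mem {I J : Ideal R} (hIJ : I ≤ J) {x : R} (hx : x ∈ J)
    {y : ℕ → R} {n : ℕ} (hy : ∀ j < n, y j ∈ I) :
    x * ∏ j ∈ range n, (x + y j) - x ^ (n + 1) ∈ I * J ^ n := by
  induction n with
  | zero => simp
  | succ n ih =>
    have hyn : y n ∈ I := hy n n.lt_succ_self
    have hsplit : x * ∏ j ∈ range (n + 1), (x + y j) - x ^ (n + 1 + 1) =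
        (x * ∏ j ∈ range n, (x + y j) - x ^ (n + 1)) * (x + y n) + y n * x ^ (n + 1) := by
      rw [prod_range_succ]; ring
    rw [hsplit]
    refine add_mem ?_ (mul_mem_mul hyn (pow_mem_pow hx (n + 1)))
    rw [pow_succ, ← mul_assoc]
    exact mul_mem_mul (ih fun j hj => hy j (by omega)) (add_mem hx (hIJ hyn))

theorem sup_span_singleton_pow_succ_le (I : Ideal R) (x : R) (m : ℕ) :
    (I ⊔ span {x}) ^ (m + 1) ≤ I * (I ⊔ span {x}) ^ m ⊔ span {x ^ (m + 1)} := by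
  induction m with
  | zero => simp
  | succ m ih =>
    have hx : span {x ^ (m + 1)} ≤ (I ⊔ span {x}) ^ (m + 1) := by
      rw [← span_singleton_pow]; exact pow_right_mono le_sup_right _
    calc (I ⊔ span {x}) ^ (m + 1 + 1) = (I ⊔ span {x}) * (I ⊔ span {x}) ^ (m + 1) :=
          pow_succ' ..
      _ ≤ (I ⊔ span {x}) * (I * (I ⊔ span {x}) ^ m ⊔ span {x ^ (m + 1)}) :=
          mul_mono_right ih
      _ = I * (I ⊔ span {x}) ^ (m + 1) ⊔ I * span {x ^ (m + 1)} ⊔ span {x ^ (m + 1 + 1)} := by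
        rw [mul_sup, mul_left_comm, ← pow_succ', sup_mul, span_singleton_mul_span_singleton,
          ← pow_succ', sup_assoc]
      _ ≤ I * (I ⊔ span {x}) ^ (m + 1) ⊔ span {x ^ (m + 1 + 1)} :=
        sup_le_sup_right (sup_le le_rfl (mul_mono_right hx)) _

theorem sup_span_singleton_pow_eq_bot {I : Ideal R} {x : R} {N n : ℕ} (hI : I ^ (N + 1) = ⊥)
    (hx : x ^ (n + 1) ∈ I * (I ⊔ span {x}) ^ n) : (I ⊔ span {x}) ^ (N + n + 1) = ⊥ := by
  set J := I ⊔ span {x}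
  have pow_succ_le (c : ℕ) : J ^ (n + c + 1) ≤ I * J ^ (n + c) := by
    refine (sup_span_singleton_pow_succ_le I x (n + c)).trans (sup_le le_rfl ?_)
    rw [span_le, Set.singleton_subset_iff, add_right_comm, pow_add, pow_add, ← mul_assoc]
    exact mul_mem_mul hx (pow_mem_pow (mem_sup_right (mem_span_singleton_self x)) c)
  have pow_add_le (t : ℕ) : J ^ (n + t) ≤ I ^ t * J ^ n := by
    induction t with
    | zero => simp
    | succ t ih =>
      calc J ^ (n + (t + 1)) ≤ I * J ^ (n + t) := pow_succ_le t
        _ ≤ I * (I ^ t * J ^ n) := mul_mono_right ih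
        _ = I ^ (t + 1) * J ^ n := by rw [pow_succ', mul_assoc]
  rw [← le_bot_iff, add_comm N, add_assoc]
  simpa [hI] using pow_add_le (N + 1)

theorem prod_pow_mem_pow_sum {I : Ideal R} {ι : Type*} {s : Finset ι} {u : ι → R}
    (hu : ∀ i ∈ s, u i ∈ I) (l : ι → ℕ) :
    ∏ i ∈ s, u i ^ l i ∈ I ^ ∑ i ∈ s, l i := by
  simpa using SetLike.prod_pow_mem_graded (fun n : ℕ => I ^ n) (fun _ => 1) u l (F := s)
    (by simpa using hu)

end Ideal

open Ideal

theorem span_image_Iio_pow_eq_bot {R : Type*} [CommRing R] {m : ℕ} {nn : ℕ → ℕ}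
    {u : ℕ → R} {y : ℕ → ℕ → R}
    (hy : ∀ i < m, ∀ j < nn i, y i j ∈ AddSubgroup.closure (u '' Set.Iio i))
    (hu : ∀ i < m, u i * ∏ j ∈ range (nn i), (u i + y i j) = 0) {k : ℕ} (hk : k ≤ m) :
    span (u '' Set.Iio k) ^ (∑ i ∈ range k, nn i + 1) = ⊥ := by
  induction k with
  | zero => simp
  | succ k ih =>
    have hk' : k < m := hk
    set I := span (u '' Set.Iio k)
    have hspan : span (u '' Set.Iio (k + 1)) = I ⊔ span {u k} := by
      rw [Set.Iio_add_one_eq_Iic, ← Set.Iio_insert, Set.image_insert_eq, span_insert, sup_comm]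
    have hyk (j : ℕ) (hj : j < nn k) : y k j ∈ I :=
      AddSubgroup.closure_le (K := I.toAddSubgroup) |>.mpr subset_span (hy k hk' j hj)
    have hpow : u k ^ (nn k + 1) ∈ I * (I ⊔ span {u k}) ^ nn k := by
      simpa [hu k hk'] using
        mul_prod_add_sub_pow_mem le_sup_left (mem_sup_right (mem_span_singleton_self (u k))) hyk
    rw [hspan, sum_range_succ]
    exact sup_span_singleton_pow_eq_bot (ih hk'.le) hpow

theorem stmt6_general (R : Type*) [CommRing R] (m : ℕ)
    (nn : ℕ → ℕ)
    (u : ℕ → R) (y : ℕ → ℕ → R)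
    (hy : ∀ i < m, ∀ j < nn i, y i j ∈ AddSubgroup.closure (u '' Set.Iio i))
    (hu : ∀ i < m, u i * ∏ j ∈ Finset.range (nn i), (u i + y i j) = 0) :
    ∀ k, 1 ≤ k → k ≤ m → ∀ l : ℕ → ℕ,
      (∑ i ∈ Finset.range k, l i) = (∑ i ∈ Finset.range k, nn i) + 1 →
      ∏ i ∈ Finset.range k, u i ^ l i = 0 := by
  intro k _ hkm l hl
  have hmem := prod_pow_mem_pow_sum (I := span (u '' Set.Iio k)) (s := range k)
    (fun i hi => subset_span ⟨i, mem_range.mp hi, rfl⟩) l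
  rwa [hl, span_image_Iio_pow_eq_bot hy hu hkm, mem_bot] at hmem

/-- Vanishing lemma for generalized real Bott manifolds: if
`u i * ∏_{j < nn i} (u i + y i j) = 0` with each `y i j` in the additive
subgroup generated by the earlier `u t`, then any monomial
`u 0 ^ l 0 ⋯ u (k-1) ^ l (k-1)` of total degree `nn 0 + ⋯ + nn (k-1) + 1`
vanishes. -/
theorem stmt6 (R : Type*) [CommRing R] (m : ℕ) (hm : 1 ≤ m)
    (nn : ℕ → ℕ) (hn : ∀ i < m, 1 ≤ nn i)
    (u : ℕ → R) (y : ℕ → ℕ → R)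
    (hy : ∀ i < m, ∀ j < nn i, y i j ∈ AddSubgroup.closure (u '' Set.Iio i))
    (hu : ∀ i < m, u i * ∏ j ∈ Finset.range (nn i), (u i + y i j) = 0) :
    ∀ k, 1 ≤ k → k ≤ m → ∀ l : ℕ → ℕ,
      (∑ i ∈ Finset.range k, l i) = (∑ i ∈ Finset.range k, nn i) + 1 →
      ∏ i ∈ Finset.range k, u i ^ l i = 0 :=
  stmt6_general R m nn u y hy hu
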